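/- Let A and B be m×n complex matrices and E = B − A. Define α′₁ := (‖A†E‖_F² − ‖A†EB†B‖_F²)/‖A‖₂² + (‖EB†‖_F² − ‖AA†EB†‖_F²)/‖B‖₂² and α′₂ := (‖EA†‖_F² − ‖BB†EA†‖_F²)/‖A‖₂² + (‖B†E‖_F² − ‖B†EA†A‖_F²)/‖B‖₂². Then ‖B† − A†‖_F² ≥ max{α′₁ + ‖B†EA†‖_F², α′₂ + ‖A†EB†‖_F²}. -/

import Mathlib

open Matrix

/-- The square of the Frobenius norm of a complex matrix. -/
noncomputable def frobSq {α β : Type*} [Fintype α] [Fintype β] (M : Matrix α β ℂ) : ℝ :=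
  ∑ i, ∑ j, ‖M i j‖ ^ 2

/-- The spectral norm (ℓ²-operator norm) of a complex matrix. -/
noncomputable def spec {α β : Type*} [Fintype α] [Fintype β] [DecidableEq β]
    (M : Matrix α β ℂ) : ℝ :=
  ‖LinearMap.toContinuousLinearMap (Matrix.toEuclideanLin M)‖

/-- `X` is the Moore–Penrose inverse of `M` (the four Penrose equations). -/
def IsMoorePenrose {α β : Type*} [Fintype α] [Fintype β]
    (M : Matrix α β ℂ) (X : Matrix β α ℂ) : Prop :=
  M * X * M = M ∧ X * M * X = X ∧ (M * X)ᴴ = M * X ∧ (X * M)ᴴ = X * M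

/-!
`P = A A†` and `Q = B† B` are orthogonal projections. Splitting `B† - A†` by `Q` on the left and
then by `P` on the right gives three Frobenius-orthogonal pieces, `Q (B† - A†) P = -B† E A†`,
`B† (1 - P)` and `(Q - 1) A†`. By Pythagoras for the same projections, the numerators of `α′₁` are
`‖A† E (1 - Q)‖²` and `‖(1 - P) E B†‖²`, and since `A† E (1 - Q) = Aᴴ ((Q - 1) A†)ᴴ` and
`(1 - P) E B† = (B B† (1 - P))ᴴ`, the bound `‖S X‖_F ≤ ‖S‖₂ ‖X‖_F` controls them by the last two
pieces. Exchanging `A` and `B` gives the bound with `α′₂`.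
-/

-- Under this instance `‖M‖` is `spec M` by definition.
open scoped Matrix.Norms.L2Operator

variable {α β γ : Type*} [Fintype α] [Fintype β] [Fintype γ]

lemma frobSq_eq_re_trace (M : Matrix α β ℂ) : frobSq M = (Mᴴ * M).trace.re := by
  simp only [frobSq, trace, diag, mul_apply, conjTranspose_apply, Complex.re_sum,
    Complex.star_def, ← Complex.normSq_eq_conj_mul_self, Complex.ofReal_re,
    Complex.normSq_eq_norm_sq]
  exact Finset.sum_comm

lemma frobSq_nonneg (M : Matrix α β ℂ) : 0 ≤ frobSq M := by
  unfold frobSq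
  positivity

@[simp] lemma frobSq_neg (M : Matrix α β ℂ) : frobSq (-M) = frobSq M := by
  simp [frobSq]

@[simp] lemma frobSq_conjTranspose (M : Matrix α β ℂ) : frobSq Mᴴ = frobSq M := by
  simp only [frobSq, conjTranspose_apply, norm_star]
  exact Finset.sum_comm

lemma frobSq_add_of_trace_conjTranspose_mul_eq_zero {X Y : Matrix α β ℂ}
    (h : (Xᴴ * Y).trace = 0) : frobSq (X + Y) = frobSq X + frobSq Y := by
  have h' : (Yᴴ * X).trace = 0 := by
    rw [← conjTranspose_conjTranspose X, ← conjTranspose_mul, trace_conjTranspose, h, star_zero]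
  simp [frobSq_eq_re_trace, Matrix.add_mul, Matrix.mul_add, h, h']

lemma IsStarProjection.frobSq_mul_add_frobSq_sub_mul {P : Matrix α α ℂ}
    (hP : IsStarProjection P) (M : Matrix α β ℂ) :
    frobSq (P * M) + frobSq (M - P * M) = frobSq M := by
  have hP_sub : P * (M - P * M) = 0 := by
    rw [Matrix.mul_sub, ← Matrix.mul_assoc, hP.isIdempotentElem.eq, sub_self]
  have hPh : Pᴴ = P := hP.isSelfAdjoint
  rw [← frobSq_add_of_trace_conjTranspose_mul_eq_zero, add_sub_cancel]
  rw [conjTranspose_mul, hPh, Matrix.mul_assoc, hP_sub, Matrix.mul_zero, trace_zero]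

lemma IsStarProjection.frobSq_mul_add_frobSq_sub_mul' {Q : Matrix β β ℂ}
    (hQ : IsStarProjection Q) (M : Matrix α β ℂ) :
    frobSq (M * Q) + frobSq (M - M * Q) = frobSq M := by
  have hQh : Qᴴ = Q := hQ.isSelfAdjoint
  rw [← frobSq_conjTranspose (M * Q), ← frobSq_conjTranspose (M - M * Q),
    ← frobSq_conjTranspose M, conjTranspose_sub, conjTranspose_mul, hQh,
    hQ.frobSq_mul_add_frobSq_sub_mul]

lemma spec_conjTranspose [DecidableEq α] [DecidableEq β] (M : Matrix α β ℂ) :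
    spec Mᴴ = spec M :=
  l2_opNorm_conjTranspose M

lemma frobSq_mul_le [DecidableEq β] (S : Matrix α β ℂ) (X : Matrix β γ ℂ) :
    frobSq (S * X) ≤ spec S ^ 2 * frobSq X := by
  have column (j : γ) : ∑ i, ‖(S * X) i j‖ ^ 2 ≤ spec S ^ 2 * ∑ i, ‖X i j‖ ^ 2 := by
    have h : ‖(EuclideanSpace.equiv α ℂ).symm (S *ᵥ WithLp.toLp 2 (Xᵀ j))‖ ≤
        spec S * ‖WithLp.toLp 2 (Xᵀ j)‖ := l2_opNorm_mulVec S _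
    simpa [EuclideanSpace.norm_sq_eq, mul_pow, mulVec, dotProduct, mul_apply] using
      pow_le_pow_left₀ (norm_nonneg _) h 2
  calc frobSq (S * X) = ∑ j, ∑ i, ‖(S * X) i j‖ ^ 2 := Finset.sum_comm
    _ ≤ ∑ j, spec S ^ 2 * ∑ i, ‖X i j‖ ^ 2 := Finset.sum_le_sum fun j _ => column j
    _ = spec S ^ 2 * frobSq X := by rw [← Finset.mul_sum, frobSq, Finset.sum_comm]

namespace IsMoorePenrose

variable {M : Matrix α β ℂ} {X : Matrix β α ℂ}

lemma isStarProjection_mul (h : IsMoorePenrose M X) : IsStarProjection (M * X) :=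
  ⟨by rw [IsIdempotentElem, ← Matrix.mul_assoc, h.1], h.2.2.1⟩

lemma isStarProjection_mul' (h : IsMoorePenrose M X) : IsStarProjection (X * M) :=
  ⟨by rw [IsIdempotentElem, ← Matrix.mul_assoc, h.2.1], h.2.2.2⟩

end IsMoorePenrose

variable {A B : Matrix α β ℂ} {Adag Bdag : Matrix β α ℂ}

lemma frobSq_sub_eq_of_isMoorePenrose (hA : IsMoorePenrose A Adag)
    (hB : IsMoorePenrose B Bdag) :
    frobSq (Bdag - Adag) = frobSq (Bdag * (B - A) * Adag) + frobSq (Bdag - Bdag * (A * Adag))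
      + frobSq (Bdag * B * Adag - Adag) := by
  have hQ_mul : Bdag * B * (Bdag - Adag) = Bdag - Bdag * B * Adag := by
    rw [Matrix.mul_sub, hB.2.1, Matrix.mul_assoc]
  have hQP : (Bdag - Bdag * B * Adag) * (A * Adag) = -(Bdag * (B - A) * Adag) := by
    rw [Matrix.sub_mul, Matrix.mul_assoc _ Adag, ← Matrix.mul_assoc Adag, hA.2.1]
    simp only [Matrix.mul_sub, Matrix.sub_mul, Matrix.mul_assoc]
    abel
  have hcompl :
      Bdag - Bdag * B * Adag - -(Bdag * (B - A) * Adag) = Bdag - Bdag * (A * Adag) := by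
    simp only [Matrix.mul_sub, Matrix.sub_mul, Matrix.mul_assoc]
    abel
  rw [← hB.isStarProjection_mul'.frobSq_mul_add_frobSq_sub_mul (Bdag - Adag), hQ_mul,
    ← hA.isStarProjection_mul.frobSq_mul_add_frobSq_sub_mul' (Bdag - Bdag * B * Adag), hQP,
    frobSq_neg, hcompl, sub_sub_sub_cancel_left]

lemma frobSq_sub_frobSq_mul_le [DecidableEq α] [DecidableEq β] (hA : IsMoorePenrose A Adag)
    (hB : IsMoorePenrose B Bdag) :
    frobSq (Adag * (B - A)) - frobSq (Adag * (B - A) * Bdag * B)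
      ≤ spec A ^ 2 * frobSq (Bdag * B * Adag - Adag) := by
  have hres :
      Adag * (B - A) - Adag * (B - A) * (Bdag * B) = Aᴴ * (Bdag * B * Adag - Adag)ᴴ := by
    have hAA : Aᴴ * Adagᴴ = Adag * A := by rw [← conjTranspose_mul, hA.2.2.2]
    have hBQ : B * (Bdag * B) = B := by rw [← Matrix.mul_assoc, hB.1]
    conv_rhs => rw [conjTranspose_sub, conjTranspose_mul, hB.2.2.2, Matrix.mul_sub,
      ← Matrix.mul_assoc, hAA]
    simp only [Matrix.mul_sub, Matrix.sub_mul, Matrix.mul_assoc, hBQ]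
    abel
  have split := hB.isStarProjection_mul'.frobSq_mul_add_frobSq_sub_mul' (Adag * (B - A))
  calc frobSq (Adag * (B - A)) - frobSq (Adag * (B - A) * Bdag * B)
      = frobSq (Aᴴ * (Bdag * B * Adag - Adag)ᴴ) := by
        rw [← hres, ← split, Matrix.mul_assoc _ Bdag B, add_sub_cancel_left]
    _ ≤ spec Aᴴ ^ 2 * frobSq (Bdag * B * Adag - Adag)ᴴ := frobSq_mul_le _ _
    _ = spec A ^ 2 * frobSq (Bdag * B * Adag - Adag) := by
        rw [spec_conjTranspose, frobSq_conjTranspose]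

lemma frobSq_sub_frobSq_mul_le' [DecidableEq β] (hA : IsMoorePenrose A Adag)
    (hB : IsMoorePenrose B Bdag) :
    frobSq ((B - A) * Bdag) - frobSq (A * Adag * (B - A) * Bdag)
      ≤ spec B ^ 2 * frobSq (Bdag - Bdag * (A * Adag)) := by
  have hres :
      (B - A) * Bdag - A * Adag * ((B - A) * Bdag) = (B * (Bdag - Bdag * (A * Adag)))ᴴ := by
    conv_rhs => rw [Matrix.mul_sub, conjTranspose_sub, ← Matrix.mul_assoc B Bdag,
      conjTranspose_mul (B * Bdag), hB.2.2.1, hA.2.2.1]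
    simp only [Matrix.mul_sub, Matrix.sub_mul, ← Matrix.mul_assoc, hA.1]
    abel
  have split := hA.isStarProjection_mul.frobSq_mul_add_frobSq_sub_mul ((B - A) * Bdag)
  calc frobSq ((B - A) * Bdag) - frobSq (A * Adag * (B - A) * Bdag)
      = frobSq (B * (Bdag - Bdag * (A * Adag))) := by
        rw [← frobSq_conjTranspose (B * _), ← hres, ← split, Matrix.mul_assoc (A * Adag),
          add_sub_cancel_left]
    _ ≤ spec B ^ 2 * frobSq (Bdag - Bdag * (A * Adag)) := frobSq_mul_le _ _

lemma le_frobSq_sub_of_isMoorePenrose [DecidableEq α] [DecidableEq β]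
    (hA : IsMoorePenrose A Adag) (hB : IsMoorePenrose B Bdag) :
    (frobSq (Adag * (B - A)) - frobSq (Adag * (B - A) * Bdag * B)) / spec A ^ 2
      + (frobSq ((B - A) * Bdag) - frobSq (A * Adag * (B - A) * Bdag)) / spec B ^ 2
      + frobSq (Bdag * (B - A) * Adag) ≤ frobSq (Bdag - Adag) := by
  have hA' := div_le_of_le_mul₀ (sq_nonneg _) (frobSq_nonneg _)
    ((frobSq_sub_frobSq_mul_le hA hB).trans_eq (mul_comm _ _))
  have hB' := div_le_of_le_mul₀ (sq_nonneg _) (frobSq_nonneg _)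
    ((frobSq_sub_frobSq_mul_le' hA hB).trans_eq (mul_comm _ _))
  rw [frobSq_sub_eq_of_isMoorePenrose hA hB]
  linarith

theorem stmt7_general {m n : ℕ}
    (A B : Matrix (Fin m) (Fin n) ℂ)
    (Adag Bdag : Matrix (Fin n) (Fin m) ℂ)
    (hA : IsMoorePenrose A Adag) (hB : IsMoorePenrose B Bdag)
    (E : Matrix (Fin m) (Fin n) ℂ) (hE : E = B - A)
    :
    frobSq (Bdag - Adag) ≥
      max
        ((frobSq (Adag * E) - frobSq (Adag * E * Bdag * B)) / spec A ^ 2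
          + (frobSq (E * Bdag) - frobSq (A * Adag * E * Bdag)) / spec B ^ 2
          + frobSq (Bdag * E * Adag))
        ((frobSq (E * Adag) - frobSq (B * Bdag * E * Adag)) / spec A ^ 2
          + (frobSq (Bdag * E) - frobSq (Bdag * E * Adag * A)) / spec B ^ 2
          + frobSq (Adag * E * Bdag)) := by
  subst hE
  refine max_le (le_frobSq_sub_of_isMoorePenrose hA hB) ?_
  have h := le_frobSq_sub_of_isMoorePenrose hB hA
  simp only [← neg_sub B A, ← neg_sub Bdag Adag, Matrix.mul_neg, Matrix.neg_mul, frobSq_neg] at h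
  linarith

theorem stmt7 {m n : ℕ}
    (A B : Matrix (Fin m) (Fin n) ℂ)
    (Adag Bdag : Matrix (Fin n) (Fin m) ℂ)
    (hA : IsMoorePenrose A Adag) (hB : IsMoorePenrose B Bdag)
    (E : Matrix (Fin m) (Fin n) ℂ) (hE : E = B - A)
    (hA0 : A ≠ 0) (hB0 : B ≠ 0)
    :
    frobSq (Bdag - Adag) ≥
      max
        ((frobSq (Adag * E) - frobSq (Adag * E * Bdag * B)) / spec A ^ 2
          + (frobSq (E * Bdag) - frobSq (A * Adag * E * Bdag)) / spec B ^ 2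
          + frobSq (Bdag * E * Adag))
        ((frobSq (E * Adag) - frobSq (B * Bdag * E * Adag)) / spec A ^ 2
          + (frobSq (Bdag * E) - frobSq (Bdag * E * Adag * A)) / spec B ^ 2
          + frobSq (Adag * E * Bdag)) :=
  stmt7_general A B Adag Bdag hA hB E hE
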